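/- arXiv:2412.04943 — 2 statements merged into one kernel-verified Lean document; each statement's English description precedes it below -/
import Mathlib

section
/- Let (P,d) be a finite metric space, k ∈ ℕ, α > 0, Δ > 0, and r : P → ℝ with r(p) ≥ r_k(p) for all p. Suppose C* ⊆ P is (α,k)-fair with |C*| ≤ k and cost(P,C*) ≤ Δ. Let c_1, …, c_ℓ be points of P listed so that r(c_1) ≤ … ≤ r(c_ℓ), and suppose d(c_j, c_i) > 2 min{α r(c_j), Δ} for all i < j. Then ℓ ≤ k. -/
open Metric Finset
open scoped Classical

/-- The k-fair radius of a point `p` in a finite metric space `P`. -/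
noncomputable def fairRadius (P : Type*) [MetricSpace P] [Fintype P] (k : ℕ) (p : P) : ℝ :=
  sInf {r : ℝ | 0 ≤ r ∧
    (Fintype.card P : ℝ) / k ≤ ((Finset.univ.filter fun q => dist p q ≤ r)).card}

theorem stmt3 (P : Type*) [MetricSpace P] [Fintype P] (k : ℕ) (α Δ : ℝ)
    (hα : 0 < α) (hΔ : 0 < Δ) (r : P → ℝ) (hr : ∀ p, fairRadius P k p ≤ r p)
    (Cstar : Finset P) (hCcard : Cstar.card ≤ k)
    (hfair : ∀ p : P, ∃ c ∈ Cstar, dist p c ≤ α * fairRadius P k p)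
    (hcost : ∀ p : P, ∃ c ∈ Cstar, dist p c ≤ Δ)
    (ℓ : ℕ) (c : Fin ℓ → P)
    (hsorted : ∀ i j : Fin ℓ, i ≤ j → r (c i) ≤ r (c j))
    (hsep : ∀ i j : Fin ℓ, i < j → 2 * min (α * r (c j)) Δ < dist (c j) (c i)) :
    ℓ ≤ k := by
  -- For each i, pick a nearest point of Cstar to c i.
  have hCne : ∀ i : Fin ℓ, Cstar.Nonempty := fun i => by
    obtain ⟨q, hq, _⟩ := hfair (c i); exact ⟨q, hq⟩
  have hnear : ∀ i : Fin ℓ, ∃ m ∈ Cstar,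
      dist (c i) m ≤ min (α * r (c i)) Δ := by
    intro i
    obtain ⟨m, hm, hmin⟩ := Finset.exists_min_image Cstar (fun q => dist (c i) q) (hCne i)
    refine ⟨m, hm, le_min ?_ ?_⟩
    · obtain ⟨q, hq, hq2⟩ := hfair (c i)
      exact (hmin q hq).trans (hq2.trans (mul_le_mul_of_nonneg_left (hr _) hα.le))
    · obtain ⟨q, hq, hq2⟩ := hcost (c i)
      exact (hmin q hq).trans hq2
  choose f hfmem hfdist using hnear
  have hinj : Function.Injective f := by
    intro i j hij
    by_contra hne
    rcases lt_or_gt_of_ne (fun h : i = j => hne h) with h | h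
    · have hsep' := hsep i j h
      have h1 : dist (c j) (c i) ≤ dist (c j) (f j) + dist (f i) (c i) := by
        rw [hij]; exact dist_triangle _ _ _
      have h2 : dist (c j) (f j) ≤ min (α * r (c j)) Δ := hfdist j
      have h3 : dist (f i) (c i) ≤ min (α * r (c j)) Δ := by
        rw [dist_comm]
        exact (hfdist i).trans (min_le_min
          (mul_le_mul_of_nonneg_left (hsorted i j h.le) hα.le) le_rfl)
      linarith
    · have hsep' := hsep j i h
      have h1 : dist (c i) (c j) ≤ dist (c i) (f i) + dist (f j) (c j) := by
        rw [← hij]; exact dist_triangle _ _ _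
      have h2 : dist (c i) (f i) ≤ min (α * r (c i)) Δ := hfdist i
      have h3 : dist (f j) (c j) ≤ min (α * r (c i)) Δ := by
        rw [dist_comm]
        exact (hfdist j).trans (min_le_min
          (mul_le_mul_of_nonneg_left (hsorted j i h.le) hα.le) le_rfl)
      linarith
  calc ℓ = Fintype.card (Fin ℓ) := (Fintype.card_fin ℓ).symm
    _ ≤ Cstar.card := by
        have := Finset.card_le_card_of_injOn f
          (fun i (_ : i ∈ (Finset.univ : Finset (Fin ℓ))) => hfmem i) hinj.injOn
        simpa using this
    _ ≤ k := hCcard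
end

section
/- Let (P,d) be a finite metric space, k ∈ ℕ, and r' : P → ℝ with r_{3k}(p) < r'(p) ≤ r_k(p) for all p. Suppose p, q ∈ P satisfy r'(q) ≤ r'(p) and d(p,q) ≤ r'(p) + r'(q). Then the value r̃(p) := d(p,q) + r_k(q) satisfies r_k(p) ≤ r̃(p) ≤ 5 r_k(p). -/
open Metric Finset
open scoped Classical

lemma fr_set_nonempty {P : Type*} [MetricSpace P] [Fintype P] (k : ℕ) (p : P) :
    {r : ℝ | 0 ≤ r ∧
      (Fintype.card P : ℝ) / k ≤ ((Finset.univ.filter fun q => dist p q ≤ r)).card}.Nonempty := by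
  have hne : (Finset.univ : Finset P).Nonempty := ⟨p, mem_univ p⟩
  refine ⟨Finset.univ.sup' hne (dist p), ?_, ?_⟩
  · exact le_trans dist_nonneg (Finset.le_sup' (dist p) (mem_univ p))
  · have hfull : (Finset.univ.filter fun q => dist p q ≤ Finset.univ.sup' hne (dist p))
        = (Finset.univ : Finset P) := by
      apply Finset.filter_true_of_mem
      intro x _
      exact Finset.le_sup' (dist p) (mem_univ x)
    rw [hfull]
    rcases Nat.eq_zero_or_pos k with hk | hk
    · simp [hk]
    · rw [Finset.card_univ]
      apply div_le_self (by positivity)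
      exact_mod_cast hk

lemma fr_bddBelow {P : Type*} [MetricSpace P] [Fintype P] (k : ℕ) (p : P) :
    BddBelow {r : ℝ | 0 ≤ r ∧
      (Fintype.card P : ℝ) / k ≤ ((Finset.univ.filter fun q => dist p q ≤ r)).card} :=
  ⟨0, fun _ hr => hr.1⟩

lemma fr_nonneg {P : Type*} [MetricSpace P] [Fintype P] (k : ℕ) (p : P) :
    0 ≤ fairRadius P k p :=
  le_csInf (fr_set_nonempty k p) (fun _ hr => hr.1)

lemma fr_lip {P : Type*} [MetricSpace P] [Fintype P] (k : ℕ) (p q : P) :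
    fairRadius P k p ≤ dist p q + fairRadius P k q := by
  apply le_of_forall_pos_le_add
  intro ε hε
  obtain ⟨r, hr, hrlt⟩ := Real.lt_sInf_add_pos (fr_set_nonempty k q) hε
  have hmem : r + dist p q ∈ {r : ℝ | 0 ≤ r ∧
      (Fintype.card P : ℝ) / k ≤ ((Finset.univ.filter fun x => dist p x ≤ r)).card} := by
    constructor
    · exact add_nonneg hr.1 dist_nonneg
    · refine le_trans hr.2 ?_
      have hsub : (Finset.univ.filter fun x => dist q x ≤ r) ⊆
          (Finset.univ.filter fun x => dist p x ≤ r + dist p q) := by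
        intro x hx
        simp only [Finset.mem_filter, Finset.mem_univ, true_and] at hx ⊢
        have := dist_triangle p q x
        linarith
      exact_mod_cast Finset.card_le_card hsub
  have h1 : fairRadius P k p ≤ r + dist p q := csInf_le (fr_bddBelow k p) hmem
  have : fairRadius P k q = sInf {r : ℝ | 0 ≤ r ∧
      (Fintype.card P : ℝ) / k ≤ ((Finset.univ.filter fun x => dist q x ≤ r)).card} := rfl
  linarith

theorem stmt11 (P : Type*) [MetricSpace P] [Fintype P] (k : ℕ)
    (r' : P → ℝ)
    (hr' : ∀ x : P, fairRadius P (3 * k) x < r' x ∧ r' x ≤ fairRadius P k x)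
    (p q : P) (hle : r' q ≤ r' p) (hd : dist p q ≤ r' p + r' q) :
    fairRadius P k p ≤ dist p q + fairRadius P k q ∧
      dist p q + fairRadius P k q ≤ 5 * fairRadius P k p := by
  refine ⟨fr_lip k p q, ?_⟩
  have h1 : fairRadius P k q ≤ dist q p + fairRadius P k p := fr_lip k q p
  rw [dist_comm q p] at h1
  have h2 : r' p ≤ fairRadius P k p := (hr' p).2
  linarith
end
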